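/- Let S = {a₁,a₂} × {b₁,b₂} be the 2×2 rectangular band and F a field. Then the complete list of two-sided ideals of F[S] is: {0}, J_L ∩ J_R, J_L, J_R, F[ω_S] = J_L + J_R, and F[S]. In particular, F[S] has exactly six two-sided ideals. -/

import Mathlib

inductive L2 : Type | a1 | a2
deriving DecidableEq

instance : Fintype L2 where
  elems := {L2.a1, L2.a2}
  complete x := by cases x <;> simp

instance : Semigroup L2 where
  mul x _ := x
  mul_assoc _ _ _ := rfl

inductive R2 : Type | b1 | b2
deriving DecidableEq

instance : Fintype R2 where
  elems := {R2.b1, R2.b2}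
  complete x := by cases x <;> simp

instance : Semigroup R2 where
  mul _ y := y
  mul_assoc _ _ _ := rfl

abbrev RB : Type := L2 × R2

def IsTwoSidedIdeal {F A : Type*} [Field F] [NonUnitalNonAssocSemiring A]
    [Module F A] (J : Submodule F A) : Prop :=
  ∀ a x : A, x ∈ J → a * x ∈ J ∧ x * a ∈ J

variable (F : Type*) [Field F]

/-- The sum-of-coefficients (augmentation) linear map on `F[S]`. -/
noncomputable def coeffSum : MonoidAlgebra F RB →ₗ[F] F where
  toFun x := ∑ s : RB, x.coeff s
  map_add' x y := by
    simp only [show ∀ s, (x + y).coeff s = x.coeff s + y.coeff s from fun _ => rfl, Finset.sum_add_distrib]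
  map_smul' c x := by
    simp only [show ∀ s, (c • x).coeff s = c * x.coeff s from fun _ => rfl, Finset.mul_sum,
      RingHom.id_apply, smul_eq_mul]

/-- `J_L`: the kernel of the map `F[S] → F[L]` induced by the projection. -/
noncomputable def JL : Submodule F (MonoidAlgebra F RB) :=
  LinearMap.ker ((Finsupp.lmapDomain F F (Prod.fst : RB → L2)).comp
    (MonoidAlgebra.coeffLinearEquiv (R := F) (S := F) (M := RB) : MonoidAlgebra F RB →ₗ[F] RB →₀ F))

/-- `J_R`: the kernel of the map `F[S] → F[R]` induced by the projection. -/
noncomputable def JR : Submodule F (MonoidAlgebra F RB) :=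
  LinearMap.ker ((Finsupp.lmapDomain F F (Prod.snd : RB → R2)).comp
    (MonoidAlgebra.coeffLinearEquiv (R := F) (S := F) (M := RB) : MonoidAlgebra F RB →ₗ[F] RB →₀ F))

/-- The element `C = (a₁,b₁) − (a₁,b₂) − (a₂,b₁) + (a₂,b₂)`. -/
noncomputable def Celt : MonoidAlgebra F RB :=
  MonoidAlgebra.single (L2.a1, R2.b1) 1 - MonoidAlgebra.single (L2.a1, R2.b2) 1
    - MonoidAlgebra.single (L2.a2, R2.b1) 1 + MonoidAlgebra.single (L2.a2, R2.b2) 1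

/-!
Write `r_i(x) = ∑_μ x(i, μ)` and `c_l(x) = ∑_j x(j, l)` for the row and column sums. Since
`(i, μ)(j, l) = (i, l)`, the product in `F[S]` is `(xy)(i, l) = r_i(x) c_l(y)`; the row sums are
the image in `F[L]` and the column sums the image in `F[R]`.

Consequently `e_p x e_p = ε(x) e_p`, so an ideal leaving the augmentation ideal `ker ε` is
everything. Inside `ker ε`, `e_(k,μ) x = c_{b₁}(x) (e_(k,b₁) - e_(k,b₂))`, and these differences
span `J_L`: an ideal not contained in `J_R` contains `J_L`, and symmetrically. As
`J_L + J_R = ker ε` and `J_L ∩ J_R = F C` is a line, deciding whether `J ⊆ J_L` and whether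
`J ⊆ J_R` leaves exactly the six ideals of the list. They are told apart by `C`,
`e_(a₁,b₁) - e_(a₁,b₂)`, `e_(a₁,b₁) - e_(a₂,b₁)` and `e_(a₁,b₁)`.
-/

section IsTwoSidedIdeal

variable {F} {A : Type*} [NonUnitalNonAssocSemiring A] [Module F A]

lemma isTwoSidedIdeal_bot : IsTwoSidedIdeal (⊥ : Submodule F A) := by
  intro a x hx
  simp_all

lemma isTwoSidedIdeal_top : IsTwoSidedIdeal (⊤ : Submodule F A) :=
  fun _ _ _ => ⟨trivial, trivial⟩

lemma IsTwoSidedIdeal.inf {J K : Submodule F A} (hJ : IsTwoSidedIdeal J)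
    (hK : IsTwoSidedIdeal K) : IsTwoSidedIdeal (J ⊓ K) := fun a _ ⟨hxJ, hxK⟩ =>
  ⟨⟨(hJ a _ hxJ).1, (hK a _ hxK).1⟩, ⟨(hJ a _ hxJ).2, (hK a _ hxK).2⟩⟩

lemma isTwoSidedIdeal_ker {B : Type*} [NonUnitalNonAssocSemiring B] [Module F B]
    (f : A →ₗ[F] B) (hf : ∀ a b, f (a * b) = f a * f b) : IsTwoSidedIdeal (LinearMap.ker f) := by
  intro a x hx
  rw [LinearMap.mem_ker] at hx
  simp [hf, hx]

end IsTwoSidedIdeal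

lemma Submodule.eq_bot_or_eq_of_le_span_singleton {K V : Type*} [DivisionRing K]
    [AddCommGroup V] [Module K V] {J : Submodule K V} {v : V} (hJ : J ≤ K ∙ v) :
    J = ⊥ ∨ J = K ∙ v := by
  refine or_iff_not_imp_left.2 fun hJ0 => le_antisymm hJ ?_
  obtain ⟨x, hxJ, hx0⟩ := Submodule.exists_mem_ne_zero_of_ne_bot hJ0
  obtain ⟨r, rfl⟩ := Submodule.mem_span_singleton.1 (hJ hxJ)
  have hr : r ≠ 0 := by rintro rfl; simp at hx0
  exact (Submodule.span_singleton_le_iff_mem _ _).2 ((J.smul_mem_iff hr).1 hxJ)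

@[simp] lemma L2.mul_eq_left (i j : L2) : i * j = i := rfl

@[simp] lemma R2.mul_eq_right (μ l : R2) : μ * l = l := rfl

section RectangularBand

open MonoidAlgebra L2 R2

variable {F}

def rowSum (x : MonoidAlgebra F RB) (i : L2) : F := ∑ μ, x.coeff (i, μ)

def colSum (x : MonoidAlgebra F RB) (l : R2) : F := ∑ j, x.coeff (j, l)

lemma coeff_mul_eq (x y : MonoidAlgebra F RB) (i : L2) (l : R2) :
    (x * y).coeff (i, l) = rowSum x i * colSum y l := by
  classical
  rw [MonoidAlgebra.coeff_mul, Finsupp.sum_fintype, rowSum, colSum, Finset.sum_mul_sum]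
  · simp [Finsupp.sum_fintype, Fintype.sum_prod_type, ite_and]
  · simp

lemma coeffSum_eq_sum_rowSum (x : MonoidAlgebra F RB) : coeffSum F x = ∑ i, rowSum x i :=
  Fintype.sum_prod_type fun s => x.coeff s

lemma coeffSum_eq_sum_colSum (x : MonoidAlgebra F RB) : coeffSum F x = ∑ l, colSum x l :=
  Fintype.sum_prod_type_right fun s => x.coeff s

lemma rowSum_mul (x y : MonoidAlgebra F RB) (i : L2) :
    rowSum (x * y) i = rowSum x i * coeffSum F y := by
  simp only [rowSum, coeff_mul_eq, ← Finset.mul_sum, coeffSum_eq_sum_colSum]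

lemma colSum_mul (x y : MonoidAlgebra F RB) (l : R2) :
    colSum (x * y) l = coeffSum F x * colSum y l := by
  simp only [colSum, coeff_mul_eq, ← Finset.sum_mul, coeffSum_eq_sum_rowSum]

lemma coeffSum_mul (x y : MonoidAlgebra F RB) :
    coeffSum F (x * y) = coeffSum F x * coeffSum F y := by
  simp only [coeffSum_eq_sum_rowSum x, coeffSum_eq_sum_rowSum (x * y), rowSum_mul, Finset.sum_mul]

lemma mapDomain_fst_apply (x : MonoidAlgebra F RB) (i : L2) :
    Finsupp.mapDomain Prod.fst x.coeff i = rowSum x i := by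
  classical
  simp [Finsupp.mapDomain, Finsupp.sum_fintype, Finsupp.single_apply, Fintype.sum_prod_type,
    rowSum]

lemma mapDomain_snd_apply (x : MonoidAlgebra F RB) (l : R2) :
    Finsupp.mapDomain Prod.snd x.coeff l = colSum x l := by
  classical
  simp [Finsupp.mapDomain, Finsupp.sum_fintype, Finsupp.single_apply,
    Fintype.sum_prod_type_right, colSum]

lemma mem_JL_iff (x : MonoidAlgebra F RB) : x ∈ JL F ↔ ∀ i, rowSum x i = 0 := by
  simp [JL, Finsupp.ext_iff, mapDomain_fst_apply]

lemma mem_JR_iff (x : MonoidAlgebra F RB) : x ∈ JR F ↔ ∀ l, colSum x l = 0 := by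
  simp [JR, Finsupp.ext_iff, mapDomain_snd_apply]

lemma JL_le_ker_coeffSum : JL F ≤ LinearMap.ker (coeffSum F) := fun x hx => by
  simp [LinearMap.mem_ker, coeffSum_eq_sum_rowSum, (mem_JL_iff x).1 hx]

lemma JR_le_ker_coeffSum : JR F ≤ LinearMap.ker (coeffSum F) := fun x hx => by
  simp [LinearMap.mem_ker, coeffSum_eq_sum_colSum, (mem_JR_iff x).1 hx]

lemma isTwoSidedIdeal_JL : IsTwoSidedIdeal (JL F) := by
  intro a x hx
  have hε : coeffSum F x = 0 := JL_le_ker_coeffSum hx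
  simp only [mem_JL_iff] at hx ⊢
  exact ⟨fun i => by rw [rowSum_mul, hε, mul_zero], fun i => by rw [rowSum_mul, hx i, zero_mul]⟩

lemma isTwoSidedIdeal_JR : IsTwoSidedIdeal (JR F) := by
  intro a x hx
  have hε : coeffSum F x = 0 := JR_le_ker_coeffSum hx
  simp only [mem_JR_iff] at hx ⊢
  exact ⟨fun l => by rw [colSum_mul, hx l, mul_zero], fun l => by rw [colSum_mul, hε, zero_mul]⟩

lemma isTwoSidedIdeal_ker_coeffSum : IsTwoSidedIdeal (LinearMap.ker (coeffSum F)) :=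
  isTwoSidedIdeal_ker _ coeffSum_mul

lemma rowSum_eq (x : MonoidAlgebra F RB) (i : L2) :
    rowSum x i = x.coeff (i, b1) + x.coeff (i, b2) := by
  simp [rowSum, Finset.univ, Fintype.elems]

lemma colSum_eq (x : MonoidAlgebra F RB) (l : R2) :
    colSum x l = x.coeff (a1, l) + x.coeff (a2, l) := by
  simp [colSum, Finset.univ, Fintype.elems]

lemma coeffSum_eq_rowSum_add (x : MonoidAlgebra F RB) :
    coeffSum F x = rowSum x a1 + rowSum x a2 := by
  simp [coeffSum_eq_sum_rowSum, Finset.univ, Fintype.elems]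

lemma coeffSum_eq_colSum_add (x : MonoidAlgebra F RB) :
    coeffSum F x = colSum x b1 + colSum x b2 := by
  simp [coeffSum_eq_sum_colSum, Finset.univ, Fintype.elems]

lemma rowSum_single (k i : L2) (μ : R2) (c : F) :
    rowSum (single (k, μ) c) i = if k = i then c else 0 := by
  cases k <;> cases i <;> cases μ <;> simp [rowSum_eq]

lemma colSum_single (k : L2) (μ l : R2) (c : F) :
    colSum (single (k, μ) c) l = if μ = l then c else 0 := by
  cases k <;> cases l <;> cases μ <;> simp [colSum_eq]

variable (F) in
noncomputable def rowDiff (i : L2) : MonoidAlgebra F RB := single (i, b1) 1 - single (i, b2) 1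

variable (F) in
noncomputable def colDiff (l : R2) : MonoidAlgebra F RB := single (a1, l) 1 - single (a2, l) 1

lemma rowDiff_mem_JL (i : L2) : rowDiff F i ∈ JL F := by
  rw [mem_JL_iff]; intro j; cases i <;> cases j <;> simp [rowDiff, rowSum_eq]

lemma colDiff_mem_JR (l : R2) : colDiff F l ∈ JR F := by
  rw [mem_JR_iff]; intro j; cases l <;> cases j <;> simp [colDiff, colSum_eq]

lemma rowDiff_notMem_JR (i : L2) : rowDiff F i ∉ JR F := by
  rw [mem_JR_iff]; intro h; have := h b1; cases i <;> simp [rowDiff, colSum_eq] at this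

lemma colDiff_notMem_JL (l : R2) : colDiff F l ∉ JL F := by
  rw [mem_JL_iff]; intro h; have := h a1; cases l <;> simp [colDiff, rowSum_eq] at this

lemma Celt_mem_JL : Celt F ∈ JL F := by
  rw [mem_JL_iff]; rintro (_ | _) <;> simp [Celt, rowSum_eq]

lemma Celt_mem_JR : Celt F ∈ JR F := by
  rw [mem_JR_iff]; rintro (_ | _) <;> simp [Celt, colSum_eq]

lemma Celt_ne_zero : Celt F ≠ 0 := fun h => by
  simpa [Celt] using congr(($h).coeff (a1, b1))

lemma JL_inf_JR_eq_span_Celt : JL F ⊓ JR F = F ∙ Celt F := by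
  refine le_antisymm (fun z hz => Submodule.mem_span_singleton.2 ⟨z.coeff (a1, b1), ?_⟩) ?_
  · obtain ⟨hzL, hzR⟩ := Submodule.mem_inf.1 hz
    simp only [mem_JL_iff, mem_JR_iff, rowSum_eq, colSum_eq] at hzL hzR
    have h12 : z.coeff (a1, b2) = -z.coeff (a1, b1) := by linear_combination hzL a1
    have h21 : z.coeff (a2, b1) = -z.coeff (a1, b1) := by linear_combination hzR b1
    have h22 : z.coeff (a2, b2) = z.coeff (a1, b1) := by linear_combination hzL a2 - hzR b1
    ext ⟨i, μ⟩
    cases i <;> cases μ <;> simp [Celt, h12, h21, h22]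
  · rw [Submodule.span_singleton_le_iff_mem]
    exact ⟨Celt_mem_JL, Celt_mem_JR⟩

lemma ker_coeffSum_le_JL_sup_JR : LinearMap.ker (coeffSum F) ≤ JL F ⊔ JR F := by
  intro z hz
  rw [LinearMap.mem_ker, coeffSum_eq_rowSum_add] at hz
  have hzL : z - rowSum z a1 • colDiff F b1 ∈ JL F := by
    rw [mem_JL_iff]
    rintro (_ | _) <;> simp [rowSum_eq, colDiff] at hz ⊢
    linear_combination hz
  simpa using Submodule.add_mem_sup hzL (Submodule.smul_mem _ (rowSum z a1) (colDiff_mem_JR b1))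

lemma single_mul_mul_single (p : RB) (x : MonoidAlgebra F RB) :
    single p 1 * x * single p 1 = coeffSum F x • single p 1 := by
  obtain ⟨k, μ⟩ := p
  ext ⟨i, l⟩
  rw [coeff_mul_eq, rowSum_mul, rowSum_single, colSum_single]
  cases i <;> cases k <;> cases l <;> cases μ <;> simp

lemma single_mul_eq_smul_rowDiff {x : MonoidAlgebra F RB}
    (hx : x ∈ LinearMap.ker (coeffSum F)) (k : L2) (μ : R2) :
    single (k, μ) 1 * x = colSum x b1 • rowDiff F k := by
  rw [LinearMap.mem_ker, coeffSum_eq_colSum_add, add_eq_zero_iff_eq_neg'] at hx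
  ext ⟨i, l⟩
  rw [coeff_mul_eq, rowSum_single]
  cases i <;> cases k <;> cases l <;> simp [rowDiff, hx]

lemma mul_single_eq_smul_colDiff {x : MonoidAlgebra F RB}
    (hx : x ∈ LinearMap.ker (coeffSum F)) (j : L2) (l : R2) :
    x * single (j, l) 1 = rowSum x a1 • colDiff F l := by
  rw [LinearMap.mem_ker, coeffSum_eq_rowSum_add, add_eq_zero_iff_eq_neg'] at hx
  ext ⟨i, ν⟩
  rw [coeff_mul_eq, colSum_single]
  cases i <;> cases l <;> cases ν <;> simp [colDiff, hx]

variable {J : Submodule F (MonoidAlgebra F RB)}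

lemma eq_top_of_coeffSum_ne_zero (hJ : IsTwoSidedIdeal J) {x : MonoidAlgebra F RB} (hxJ : x ∈ J)
    (hx : coeffSum F x ≠ 0) : J = ⊤ := by
  have hsingle (p : RB) : single p 1 ∈ J := by
    rw [← J.smul_mem_iff hx, ← single_mul_mul_single]
    exact (hJ _ _ (hJ _ x hxJ).1).2
  refine Submodule.eq_top_iff'.2 fun z => z.induction_linear J.zero_mem (fun _ _ => J.add_mem)
    fun p c => ?_
  simpa [smul_single'] using J.smul_mem c (hsingle p)

lemma JL_le_of_forall_rowDiff_mem (hJ : ∀ i, rowDiff F i ∈ J) : JL F ≤ J := by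
  intro z hz
  simp only [mem_JL_iff, rowSum_eq] at hz
  have h1 : z.coeff (a1, b2) = -z.coeff (a1, b1) := by linear_combination hz a1
  have h2 : z.coeff (a2, b2) = -z.coeff (a2, b1) := by linear_combination hz a2
  have hz : z = z.coeff (a1, b1) • rowDiff F a1 + z.coeff (a2, b1) • rowDiff F a2 := by
    ext ⟨i, μ⟩
    cases i <;> cases μ <;> simp [rowDiff, h1, h2]
  rw [hz]
  exact add_mem (J.smul_mem _ (hJ a1)) (J.smul_mem _ (hJ a2))

lemma JR_le_of_forall_colDiff_mem (hJ : ∀ l, colDiff F l ∈ J) : JR F ≤ J := by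
  intro z hz
  simp only [mem_JR_iff, colSum_eq] at hz
  have h1 : z.coeff (a2, b1) = -z.coeff (a1, b1) := by linear_combination hz b1
  have h2 : z.coeff (a2, b2) = -z.coeff (a1, b2) := by linear_combination hz b2
  have hz : z = z.coeff (a1, b1) • colDiff F b1 + z.coeff (a1, b2) • colDiff F b2 := by
    ext ⟨i, μ⟩
    cases i <;> cases μ <;> simp [colDiff, h1, h2]
  rw [hz]
  exact add_mem (J.smul_mem _ (hJ b1)) (J.smul_mem _ (hJ b2))

lemma JL_le_of_not_le_JR (hJ : IsTwoSidedIdeal J) (hε : J ≤ LinearMap.ker (coeffSum F))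
    (hR : ¬ J ≤ JR F) : JL F ≤ J := by
  obtain ⟨x, hxJ, hxR⟩ := SetLike.not_le_iff_exists.1 hR
  have hx : colSum x b1 + colSum x b2 = 0 := (coeffSum_eq_colSum_add x).symm.trans (hε hxJ)
  have hc : colSum x b1 ≠ 0 := fun h => hxR <| (mem_JR_iff x).2 <| by
    rintro (_ | _) <;> simp_all
  refine JL_le_of_forall_rowDiff_mem fun k => ?_
  rw [← J.smul_mem_iff hc, ← single_mul_eq_smul_rowDiff (hε hxJ) k b1]
  exact (hJ _ x hxJ).1

lemma JR_le_of_not_le_JL (hJ : IsTwoSidedIdeal J) (hε : J ≤ LinearMap.ker (coeffSum F))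
    (hL : ¬ J ≤ JL F) : JR F ≤ J := by
  obtain ⟨x, hxJ, hxL⟩ := SetLike.not_le_iff_exists.1 hL
  have hx : rowSum x a1 + rowSum x a2 = 0 := (coeffSum_eq_rowSum_add x).symm.trans (hε hxJ)
  have hc : rowSum x a1 ≠ 0 := fun h => hxL <| (mem_JL_iff x).2 <| by
    rintro (_ | _) <;> simp_all
  refine JR_le_of_forall_colDiff_mem fun l => ?_
  rw [← J.smul_mem_iff hc, ← mul_single_eq_smul_colDiff (hε hxJ) a1 l]
  exact (hJ (single (a1, l) 1) x hxJ).2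

lemma IsTwoSidedIdeal.eq_bot_or_inf_or_JL_or_JR_or_ker_or_top (hJ : IsTwoSidedIdeal J) :
    J = ⊥ ∨ J = JL F ⊓ JR F ∨ J = JL F ∨ J = JR F ∨ J = LinearMap.ker (coeffSum F) ∨ J = ⊤ := by
  by_cases hε : J ≤ LinearMap.ker (coeffSum F)
  swap
  · obtain ⟨x, hxJ, hx⟩ := SetLike.not_le_iff_exists.1 hε
    exact Or.inr <| Or.inr <| Or.inr <| Or.inr <| Or.inr <| eq_top_of_coeffSum_ne_zero hJ hxJ hx
  by_cases hL : J ≤ JL F <;> by_cases hR : J ≤ JR F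
  · rw [← or_assoc, JL_inf_JR_eq_span_Celt]
    exact Or.inl <| Submodule.eq_bot_or_eq_of_le_span_singleton <|
      JL_inf_JR_eq_span_Celt (F := F) ▸ le_inf hL hR
  · exact Or.inr <| Or.inr <| Or.inl <| le_antisymm hL (JL_le_of_not_le_JR hJ hε hR)
  · exact Or.inr <| Or.inr <| Or.inr <| Or.inl <| le_antisymm hR (JR_le_of_not_le_JL hJ hε hL)
  · refine Or.inr <| Or.inr <| Or.inr <| Or.inr <| Or.inl <| le_antisymm hε ?_
    exact ker_coeffSum_le_JL_sup_JR.trans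
      (sup_le (JL_le_of_not_le_JR hJ hε hR) (JR_le_of_not_le_JL hJ hε hL))

lemma pairwise_ne_bot_inf_JL_JR_ker_top :
    List.Pairwise (· ≠ ·)
      [(⊥ : Submodule F (MonoidAlgebra F RB)), JL F ⊓ JR F, JL F, JR F,
        LinearMap.ker (coeffSum F), ⊤] := by
  have h₁ : ⊥ < JL F ⊓ JR F := by
    rw [bot_lt_iff_ne_bot, JL_inf_JR_eq_span_Celt, Ne, Submodule.span_singleton_eq_bot]
    exact Celt_ne_zero
  have h₂ : JL F ⊓ JR F < JL F := SetLike.lt_iff_le_and_exists.2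
    ⟨inf_le_left, rowDiff F a1, rowDiff_mem_JL a1, fun h => rowDiff_notMem_JR a1 h.2⟩
  have h₃ : JL F ⊓ JR F < JR F := SetLike.lt_iff_le_and_exists.2
    ⟨inf_le_right, colDiff F b1, colDiff_mem_JR b1, fun h => colDiff_notMem_JL b1 h.1⟩
  have h₄ : JL F < LinearMap.ker (coeffSum F) := SetLike.lt_iff_le_and_exists.2
    ⟨JL_le_ker_coeffSum, colDiff F b1, JR_le_ker_coeffSum (colDiff_mem_JR b1),
      colDiff_notMem_JL b1⟩
  have h₅ : JR F < LinearMap.ker (coeffSum F) := SetLike.lt_iff_le_and_exists.2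
    ⟨JR_le_ker_coeffSum, rowDiff F a1, JL_le_ker_coeffSum (rowDiff_mem_JL a1),
      rowDiff_notMem_JR a1⟩
  have h₆ : LinearMap.ker (coeffSum F) < ⊤ := SetLike.lt_iff_le_and_exists.2
    ⟨le_top, single (a1, b1) 1, trivial, by simp [coeffSum_eq_rowSum_add, rowSum_eq]⟩
  have h₇ : ¬ JL F ≤ JR F := fun h => rowDiff_notMem_JR a1 (h (rowDiff_mem_JL a1))
  simp only [List.pairwise_cons, List.mem_cons, List.not_mem_nil, or_false, forall_eq_or_imp,
    forall_eq, List.Pairwise.nil, IsEmpty.forall_iff, forall_const, and_true]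
  and_intros <;> order

end RectangularBand

/-- The complete list of two-sided ideals of the semigroup algebra of the 2x2
rectangular band: `{0}`, `J_L ∩ J_R`, `J_L`, `J_R`, the augmentation ideal
`F[ω_S]`, and `F[S]`; these six ideals are pairwise distinct. -/
theorem rectangularBand_ideal_classification :
    (∀ J : Submodule F (MonoidAlgebra F RB),
      IsTwoSidedIdeal J ↔
        (J = ⊥ ∨ J = JL F ⊓ JR F ∨ J = JL F ∨ J = JR F ∨
         J = LinearMap.ker (coeffSum F) ∨ J = ⊤)) ∧
    List.Pairwise (· ≠ ·)
      [(⊥ : Submodule F (MonoidAlgebra F RB)), JL F ⊓ JR F, JL F, JR F,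
        LinearMap.ker (coeffSum F), ⊤] := by
  refine ⟨fun J => ⟨IsTwoSidedIdeal.eq_bot_or_inf_or_JL_or_JR_or_ker_or_top, ?_⟩,
    pairwise_ne_bot_inf_JL_JR_ker_top⟩
  rintro (rfl | rfl | rfl | rfl | rfl | rfl)
  exacts [isTwoSidedIdeal_bot, isTwoSidedIdeal_JL.inf isTwoSidedIdeal_JR, isTwoSidedIdeal_JL,
    isTwoSidedIdeal_JR, isTwoSidedIdeal_ker_coeffSum, isTwoSidedIdeal_top]
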